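/- arXiv:2311.04609 — 2 statements merged into one kernel-verified Lean document; each statement's English description precedes it below -/
import Mathlib

section
/- Feasibility under ellipsoidal uncertainty (Theorem 4.1): for every δ_E > 0, the robust feasibility condition "for all ζ ∈ ℝⁿ with ‖ζ‖₂ ≤ δ_E, ((δ_E μ⁽⁰⁾ + Σ_{j=1}^n ζⱼ μ⁽ʲ⁾)ᵀ x)² ≥ τ² δ_E²" holds if and only if there exists λ ≥ 0 such that the matrix A − λ B⁽ᴱ⁾ — i.e. the symmetric (n+1)×(n+1) matrix with (0,0)-entry a₀² − τ² − λ, (j,j)-entry a_j² + λ for 1 ≤ j ≤ n, and (i,j)-entry a_i a_j for i ≠ j — is positive semidefinite. -/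
/-!
Write `b = (a₁, …, aₙ)` and `β = ‖b‖`. Over the ball `‖ζ‖ ≤ δ` the value `δ a₀ + ⟨ζ, b⟩` is
extremal along multiples of `b`, so for `τ ≠ 0` robust feasibility amounts to
`β + |τ| ≤ |a₀|`. Under that inequality `λ = |τ| β` works: the quadratic form
`(u a₀ + ⟨w, b⟩)² - τ² u² - λ (u² - ‖w‖²)` of `A - λ B⁽ᴱ⁾`, multiplied by `β (β + |τ|)`, is a
square plus nonnegative multiples of `a₀² - (β + |τ|)²` and of the Cauchy–Schwarz defect
`β² ‖w‖² - ⟨w, b⟩²`. Conversely, evaluating the form at `(δ, ζ)` gives the robust inequality,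
since `λ (δ² - ‖ζ‖²) ≥ 0`.
-/

open Matrix

noncomputable section

/-- `a j = (μ⁽ʲ⁾)ᵀ x`, the dot product of the `j`-th expected-return vector with `x`. -/
def avec (n : ℕ) (x : Fin n → ℝ) (μ : Fin (n + 1) → Fin n → ℝ) : Fin (n + 1) → ℝ :=
  fun j => μ j ⬝ᵥ x

/-- The symmetric matrix `A = a aᵀ - τ² e₀ e₀ᵀ`. -/
def Amat (n : ℕ) (x : Fin n → ℝ) (τ : ℝ) (μ : Fin (n + 1) → Fin n → ℝ) :
    Matrix (Fin (n + 1)) (Fin (n + 1)) ℝ :=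
  Matrix.of fun i j =>
    avec n x μ i * avec n x μ j - if i = 0 ∧ j = 0 then τ ^ 2 else 0

/-- The matrix `B⁽ᴱ⁾ = diag(1, -1, …, -1)`. -/
def BE (n : ℕ) : Matrix (Fin (n + 1)) (Fin (n + 1)) ℝ :=
  Matrix.diagonal fun i => if i = 0 then 1 else -1

/-- The matrix `B⁽ᴾ⁾ = e₀e₀ᵀ - J`: `(0,0)`-entry `1`, entries `-1` for `i, j ≥ 1`,
zero elsewhere. -/
def BP (n : ℕ) : Matrix (Fin (n + 1)) (Fin (n + 1)) ℝ :=
  Matrix.of fun i j =>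
    if i = 0 ∧ j = 0 then 1 else if i ≠ 0 ∧ j ≠ 0 then -1 else 0

/-- A real matrix is positive semidefinite: `zᵀ M z ≥ 0` for all `z`. -/
def IsPSD {d : ℕ} (M : Matrix (Fin d) (Fin d) ℝ) : Prop :=
  ∀ z : Fin d → ℝ, 0 ≤ z ⬝ᵥ M *ᵥ z

lemma Amat_eq_vecMulVec_sub_single (n : ℕ) (x : Fin n → ℝ) (τ : ℝ)
    (μ : Fin (n + 1) → Fin n → ℝ) :
    Amat n x τ μ = vecMulVec (avec n x μ) (avec n x μ) - single 0 0 (τ ^ 2) := by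
  ext i j
  simp [Amat, vecMulVec_apply, single_apply, eq_comm]

lemma dotProduct_Amat_mulVec (n : ℕ) (x : Fin n → ℝ) (τ : ℝ) (μ : Fin (n + 1) → Fin n → ℝ)
    (z : Fin (n + 1) → ℝ) :
    z ⬝ᵥ Amat n x τ μ *ᵥ z = (z ⬝ᵥ avec n x μ) ^ 2 - τ ^ 2 * z 0 ^ 2 := by
  rw [Amat_eq_vecMulVec_sub_single, sub_mulVec, dotProduct_sub, vecMulVec_mulVec, single_mulVec,
    ← Pi.single, dotProduct_comm z (Pi.single _ _), single_dotProduct]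
  simp [dotProduct_comm z]
  ring

lemma cons_dotProduct_BE_mulVec_cons (n : ℕ) (u : ℝ) (w : Fin n → ℝ) :
    Fin.cons u w ⬝ᵥ BE n *ᵥ Fin.cons u w = u ^ 2 - ∑ j, w j ^ 2 := by
  simp [BE, dotProduct, mulVec_diagonal, Fin.sum_univ_succ, Fin.succ_ne_zero, sq, sub_eq_add_neg]

lemma cons_dotProduct_Amat_sub_smul_BE_mulVec_cons (n : ℕ) (x : Fin n → ℝ) (τ lam : ℝ)
    (μ : Fin (n + 1) → Fin n → ℝ) (u : ℝ) (w : Fin n → ℝ) :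
    Fin.cons u w ⬝ᵥ (Amat n x τ μ - lam • BE n) *ᵥ Fin.cons u w =
      (u * avec n x μ 0 + w ⬝ᵥ Fin.tail (avec n x μ)) ^ 2 - τ ^ 2 * u ^ 2
        - lam * (u ^ 2 - ∑ j, w j ^ 2) := by
  rw [sub_mulVec, dotProduct_sub, smul_mulVec, dotProduct_smul, dotProduct_Amat_mulVec,
    cons_dotProduct_BE_mulVec_cons, ← vecCons, cons_dotProduct]
  rfl

lemma add_sum_smul_dotProduct (n : ℕ) (x : Fin n → ℝ) (μ : Fin (n + 1) → Fin n → ℝ) (δ : ℝ)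
    (ζ : Fin n → ℝ) :
    (δ • μ 0 + ∑ j, ζ j • μ j.succ) ⬝ᵥ x = δ * avec n x μ 0 + ζ ⬝ᵥ Fin.tail (avec n x μ) := by
  simp only [add_dotProduct, sum_dotProduct, smul_dotProduct, smul_eq_mul]
  rfl

lemma add_abs_le_abs_of_forall_sq_le {a β τ δ : ℝ} (hδ : 0 < δ) (hτ : τ ≠ 0) (hβ : 0 ≤ β)
    (h : ∀ c : ℝ, c ^ 2 * β ^ 2 ≤ δ ^ 2 → τ ^ 2 * δ ^ 2 ≤ (δ * a + c * β ^ 2) ^ 2) :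
    β + |τ| ≤ |a| := by
  wlog ha : 0 ≤ a generalizing a
  · have key := this (a := -a) (fun c hc => by
        convert h (-c) (by rwa [neg_sq]) using 1; ring) (by linarith)
    rwa [abs_neg] at key
  rw [abs_of_nonneg ha]
  have hβa : β ≤ a := by
    by_contra! hlt
    have hβ0 : 0 < β := ha.trans_lt hlt
    have hzero : δ * a + -(δ * a / β ^ 2) * β ^ 2 = 0 := by field_simp; ring
    have key := h (-(δ * a / β ^ 2)) (by
      rw [neg_sq, div_pow, div_mul_eq_mul_div, div_le_iff₀ (by positivity)]
      nlinarith [mul_le_mul_of_nonneg_left (pow_le_pow_left₀ ha hlt.le 2) (sq_nonneg (δ * β))])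
    rw [hzero] at key
    have : 0 < τ ^ 2 * δ ^ 2 := by positivity
    nlinarith
  have hc : -(δ / β) * β ^ 2 = -(δ * β) := by
    rcases hβ.eq_or_lt with rfl | hβ0
    · simp
    · field_simp
  have key := h (-(δ / β)) (by
    rcases hβ.eq_or_lt with rfl | hβ0
    · simp [hδ.le]
    · rw [neg_sq, div_pow, div_mul_cancel₀ _ (by positivity)])
  have key' : τ ^ 2 * δ ^ 2 ≤ (a - β) ^ 2 * δ ^ 2 := key.trans_eq (by rw [hc]; ring)
  have := sq_le_sq.mp (le_of_mul_le_mul_right key' (by positivity))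
  rw [abs_of_nonneg (sub_nonneg.mpr hβa)] at this
  linarith

lemma sq_add_sub_mul_sub_nonneg {a p τ β u S : ℝ} (hβ : 0 ≤ β) (hp : p ^ 2 ≤ β ^ 2 * S)
    (h : β + |τ| ≤ |a|) :
    0 ≤ (u * a + p) ^ 2 - τ ^ 2 * u ^ 2 - |τ| * β * (u ^ 2 - S) := by
  rw [← sq_abs τ]
  set t := |τ|
  have ht0 : 0 ≤ t := abs_nonneg τ
  rcases hβ.eq_or_lt with rfl | hβ0
  · have hp0 : p = 0 := by nlinarith [sq_nonneg p]
    have hta : t ^ 2 ≤ a ^ 2 := sq_le_sq.mpr (by rw [abs_of_nonneg ht0]; linarith)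
    subst hp0
    nlinarith [mul_le_mul_of_nonneg_right hta (sq_nonneg u)]
  · have hba : (β + t) ^ 2 ≤ a ^ 2 :=
      sq_le_sq.mpr (by rw [abs_of_nonneg (by positivity)]; exact h)
    have hsos : β * (β + t) * ((u * a + p) ^ 2 - t ^ 2 * u ^ 2 - t * β * (u ^ 2 - S)) =
        ((β + t) * p + β * a * u) ^ 2 + t * β * (a ^ 2 - (β + t) ^ 2) * u ^ 2
          + t * (β + t) * (β ^ 2 * S - p ^ 2) := by ring
    refine nonneg_of_mul_nonneg_right (a := β * (β + t)) ?_ (by positivity)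
    rw [hsos]
    have hsq : 0 ≤ t * β * (a ^ 2 - (β + t) ^ 2) * u ^ 2 :=
      mul_nonneg (mul_nonneg (by positivity) (sub_nonneg.2 hba)) (sq_nonneg u)
    have hcs : 0 ≤ t * (β + t) * (β ^ 2 * S - p ^ 2) :=
      mul_nonneg (by positivity) (sub_nonneg.2 hp)
    exact add_nonneg (add_nonneg (sq_nonneg _) hsq) hcs

theorem feasibility_ellipsoidal_general (n : ℕ) (x : Fin n → ℝ) (τ : ℝ)
    (μ : Fin (n + 1) → Fin n → ℝ) (δE : ℝ) (hδE : 0 < δE) :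
    (∀ ζ : Fin n → ℝ, Real.sqrt (∑ j, ζ j ^ 2) ≤ δE →
        τ ^ 2 * δE ^ 2 ≤ ((δE • μ 0 + ∑ j : Fin n, ζ j • μ j.succ) ⬝ᵥ x) ^ 2) ↔
      ∃ lam : ℝ, 0 ≤ lam ∧ IsPSD (Amat n x τ μ - lam • BE n) := by
  simp_rw [add_sum_smul_dotProduct, Real.sqrt_le_left hδE.le]
  set b := Fin.tail (avec n x μ)
  constructor
  · intro h
    rcases eq_or_ne τ 0 with rfl | hτ
    · refine ⟨0, le_rfl, fun z => ?_⟩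
      rw [← Fin.cons_self_tail z, cons_dotProduct_Amat_sub_smul_BE_mulVec_cons]
      simpa using sq_nonneg _
    set β := √(∑ j, b j ^ 2)
    have hβ : 0 ≤ β := Real.sqrt_nonneg _
    have hβsq : β ^ 2 = ∑ j, b j ^ 2 := Real.sq_sqrt (by positivity)
    have hab : β + |τ| ≤ |avec n x μ 0| := add_abs_le_abs_of_forall_sq_le hδE hτ hβ fun c hc => by
      have key := h (c • b) (by simpa [mul_pow, ← Finset.mul_sum, ← hβsq] using hc)
      rwa [smul_dotProduct, smul_eq_mul, show b ⬝ᵥ b = β ^ 2 by simp [hβsq, dotProduct, sq]] at key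
    refine ⟨|τ| * β, by positivity, fun z => ?_⟩
    rw [← Fin.cons_self_tail z, cons_dotProduct_Amat_sub_smul_BE_mulVec_cons]
    exact sq_add_sub_mul_sub_nonneg hβ
      ((Finset.sum_mul_sq_le_sq_mul_sq _ _ _).trans_eq (by rw [hβsq, mul_comm])) hab
  · rintro ⟨lam, hlam, hpsd⟩ ζ hζ
    have key := hpsd (Fin.cons δE ζ)
    rw [cons_dotProduct_Amat_sub_smul_BE_mulVec_cons] at key
    nlinarith [mul_nonneg hlam (sub_nonneg.2 hζ)]

/-- **Theorem 4.1** (feasibility under ellipsoidal uncertainty): the radius-`δ_E` robust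
feasibility condition holds iff there is `λ ≥ 0` with `A - λ B⁽ᴱ⁾` positive semidefinite. -/
theorem feasibility_ellipsoidal (n : ℕ) (hn : 1 ≤ n) (x : Fin n → ℝ) (τ : ℝ)
    (μ : Fin (n + 1) → Fin n → ℝ) (δE : ℝ) (hδE : 0 < δE) :
    (∀ ζ : Fin n → ℝ, Real.sqrt (∑ j, ζ j ^ 2) ≤ δE →
        τ ^ 2 * δE ^ 2 ≤ ((δE • μ 0 + ∑ j : Fin n, ζ j • μ j.succ) ⬝ᵥ x) ^ 2) ↔
      ∃ lam : ℝ, 0 ≤ lam ∧ IsPSD (Amat n x τ μ - lam • BE n) :=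
  feasibility_ellipsoidal_general n x τ μ δE hδE
end
end

section
/- Quadratic-relaxation form of the polyhedral feasibility condition (precise version of Theorem 4.3): let δ_P > 0. Then the condition "for all ζ ∈ ℝⁿ with |Σ_{j=1}^n ζⱼ| ≤ δ_P, ((δ_P μ⁽⁰⁾ + Σ_{j=1}^n ζⱼ μ⁽ʲ⁾)ᵀ x)² ≥ τ² δ_P²" holds if and only if there exists λ ≥ 0 such that the matrix A − λ B⁽ᴾ⁾ — i.e. the symmetric (n+1)×(n+1) matrix with (0,0)-entry a₀² − τ² − λ, (0,j)- and (j,0)-entries a₀ a_j, and (i,j)-entry a_i a_j + λ for 1 ≤ i, j ≤ n — is positive semidefinite. -/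
open Matrix

noncomputable section

/-!
The condition says that the affine function `ζ ↦ (δ, ζ) ⬝ a` has square at least `τ²δ²` on the
slab `|∑ ζ| ≤ δ`. If it vanishes somewhere on the slab, then `τ = 0` and `λ = 0` works, since
`A = a aᵀ`. Otherwise `a₁ = ⋯ = aₙ =: c` with `|c| < |a₀|` (else a zero is easy to write down),
testing `ζ = ±δ eᵢ` gives `τ² ≤ (|a₀| - |c|)²`, and with `λ = |a₀ c| - c²` the quadratic form of
`A - λ B⁽ᴾ⁾` at `z` is at least `|a₀ c| (z₀ ± ∑ᵢ zᵢ)²`. Conversely, evaluating a positive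
semidefinite `A - λ B⁽ᴾ⁾` at `z = (δ, ζ)` gives the condition.
-/

theorem dotProduct_vecMulVec_self_mulVec {m R : Type*} [Fintype m] [CommSemiring R]
    (u z : m → R) :
    z ⬝ᵥ vecMulVec u u *ᵥ z = (z ⬝ᵥ u) ^ 2 := by
  rw [vecMulVec_mulVec, op_smul_eq_smul, dotProduct_smul, smul_eq_mul, dotProduct_comm u z, sq]

theorem Amat_eq_vecMulVec_sub (n : ℕ) (x : Fin n → ℝ) (τ : ℝ) (μ : Fin (n + 1) → Fin n → ℝ) :
    Amat n x τ μ = vecMulVec (avec n x μ) (avec n x μ) -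
      τ ^ 2 • vecMulVec (Pi.single 0 1) (Pi.single 0 1) := by
  ext i j
  simp only [Amat, of_apply, Matrix.sub_apply, Matrix.smul_apply, vecMulVec_apply, Pi.single_apply]
  split_ifs <;> simp_all

theorem BP_eq_vecMulVec_sub (n : ℕ) :
    BP n = vecMulVec (Pi.single 0 1) (Pi.single 0 1) - vecMulVec (vecCons 0 1) (vecCons 0 1) := by
  ext i j
  cases i using Fin.cases <;> cases j using Fin.cases <;> simp [BP, vecMulVec_apply, Fin.succ_ne_zero]

theorem dotProduct_Amat_sub_smul_BP_mulVec (n : ℕ) (x : Fin n → ℝ) (τ : ℝ)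
    (μ : Fin (n + 1) → Fin n → ℝ) (lam : ℝ) (z : Fin (n + 1) → ℝ) :
    z ⬝ᵥ (Amat n x τ μ - lam • BP n) *ᵥ z =
      (z ⬝ᵥ avec n x μ) ^ 2 - τ ^ 2 * z 0 ^ 2 - lam * (z 0 ^ 2 - (z ⬝ᵥ vecCons 0 1) ^ 2) := by
  simp only [Amat_eq_vecMulVec_sub, BP_eq_vecMulVec_sub, sub_mulVec, smul_mulVec, dotProduct_sub,
    dotProduct_smul, dotProduct_vecMulVec_self_mulVec, dotProduct_single, mul_one, smul_eq_mul]

theorem add_sum_smul_dotProduct_eq_cons_dotProduct_avec (n : ℕ) (x : Fin n → ℝ)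
    (μ : Fin (n + 1) → Fin n → ℝ) (δ : ℝ) (ζ : Fin n → ℝ) :
    (δ • μ 0 + ∑ j, ζ j • μ j.succ) ⬝ᵥ x = vecCons δ ζ ⬝ᵥ avec n x μ := by
  rw [cons_dotProduct, add_dotProduct, sum_dotProduct]
  simp only [smul_dotProduct, smul_eq_mul]
  rfl

theorem cons_dotProduct_single {n : ℕ} (a : Fin (n + 1) → ℝ) (δ t : ℝ) (i : Fin n) :
    vecCons δ (Pi.single i t) ⬝ᵥ a = δ * a 0 + t * a i.succ := by
  simp [single_dotProduct, vecHead, vecTail]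

theorem sq_le_sq_abs_sub_abs {τ p c : ℝ} (hm : τ ^ 2 ≤ (p - c) ^ 2) (hp : τ ^ 2 ≤ (p + c) ^ 2) :
    τ ^ 2 ≤ (|p| - |c|) ^ 2 := by
  rcases abs_cases p with ⟨hp', -⟩ | ⟨hp', -⟩ <;> rcases abs_cases c with ⟨hc', -⟩ | ⟨hc', -⟩ <;>
    rw [hp', hc'] <;> linarith

theorem relaxation_form_nonneg {τ p c : ℝ} (hτ : τ ^ 2 ≤ (|p| - |c|) ^ 2) (u v : ℝ) :
    0 ≤ (p * u + c * v) ^ 2 - τ ^ 2 * u ^ 2 - (|p * c| - c ^ 2) * (u ^ 2 - v ^ 2) := by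
  have hpc : -(p * c * (u * v)) ≤ |p * c| * |u * v| := by
    rw [← abs_mul]; exact neg_le_abs _
  have huv : 2 * |u * v| ≤ u ^ 2 + v ^ 2 := by
    rw [abs_mul, ← sq_abs u, ← sq_abs v]; nlinarith [sq_nonneg (|u| - |v|)]
  have hsq : (|p| - |c|) ^ 2 = p ^ 2 - 2 * |p * c| + c ^ 2 := by
    rw [abs_mul]; ring_nf; rw [sq_abs, sq_abs]
  rw [hsq] at hτ
  nlinarith [mul_le_mul_of_nonneg_left huv (abs_nonneg (p * c)),
    mul_le_mul_of_nonneg_right hτ (sq_nonneg u)]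

section Slab

variable {n : ℕ} {a : Fin (n + 1) → ℝ} {δ : ℝ}

theorem exists_cons_dotProduct_eq_zero_of_ne {i j : Fin n} (h : a i.succ ≠ a j.succ) :
    ∃ ζ : Fin n → ℝ, ∑ k, ζ k = 0 ∧ vecCons δ ζ ⬝ᵥ a = 0 := by
  set r := -(δ * a 0) / (a i.succ - a j.succ)
  have hr : r * (a i.succ - a j.succ) = -(δ * a 0) := div_mul_cancel₀ _ (sub_ne_zero.mpr h)
  refine ⟨Pi.single i r - Pi.single j r, by simp, ?_⟩
  rw [cons_dotProduct, sub_dotProduct, single_dotProduct, single_dotProduct]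
  simp only [vecHead, vecTail, Function.comp_apply]
  linear_combination hr

theorem exists_cons_dotProduct_eq_zero_of_abs_le (hδ : 0 ≤ δ) {i : Fin n}
    (h : |a 0| ≤ |a i.succ|) : ∃ ζ : Fin n → ℝ, |∑ k, ζ k| ≤ δ ∧ vecCons δ ζ ⬝ᵥ a = 0 := by
  refine ⟨Pi.single i (-(δ * a 0) / a i.succ), ?_, ?_⟩
  · rw [Finset.sum_pi_single', if_pos (Finset.mem_univ _), abs_div, abs_neg, abs_mul,
      abs_of_nonneg hδ]
    exact div_le_of_le_mul₀ (abs_nonneg _) hδ (mul_le_mul_of_nonneg_left h hδ)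
  · rw [cons_dotProduct_single]
    rcases eq_or_ne (a i.succ) 0 with hc | hc
    · simp_all
    · field_simp; ring

theorem dotProduct_eq_of_succ_eq {c : ℝ} (hc : ∀ i : Fin n, a i.succ = c) (z : Fin (n + 1) → ℝ) :
    z ⬝ᵥ a = a 0 * z 0 + c * (z ⬝ᵥ vecCons 0 1) := by
  simp [dotProduct, Fin.sum_univ_succ, hc, Finset.mul_sum, mul_comm]

variable {τ : ℝ}

theorem forall_slab_of_multiplier {lam : ℝ} (hlam : 0 ≤ lam)
    (hpsd : ∀ z : Fin (n + 1) → ℝ,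
      0 ≤ (z ⬝ᵥ a) ^ 2 - τ ^ 2 * z 0 ^ 2 - lam * (z 0 ^ 2 - (z ⬝ᵥ vecCons 0 1) ^ 2))
    (ζ : Fin n → ℝ) (hζ : |∑ j, ζ j| ≤ δ) : τ ^ 2 * δ ^ 2 ≤ (vecCons δ ζ ⬝ᵥ a) ^ 2 := by
  have hq := hpsd (vecCons δ ζ)
  simp only [cons_val_zero, cons_dotProduct_cons, mul_zero, zero_add, dotProduct_one] at hq
  have hle : (∑ j, ζ j) ^ 2 ≤ δ ^ 2 := sq_le_sq' (abs_le.mp hζ).1 (abs_le.mp hζ).2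
  nlinarith [mul_nonneg hlam (sub_nonneg.2 hle)]

theorem exists_multiplier_of_forall_slab (hδ : 0 < δ) (i₀ : Fin n)
    (h : ∀ ζ : Fin n → ℝ, |∑ j, ζ j| ≤ δ → τ ^ 2 * δ ^ 2 ≤ (vecCons δ ζ ⬝ᵥ a) ^ 2) :
    ∃ lam, 0 ≤ lam ∧ ∀ z : Fin (n + 1) → ℝ,
      0 ≤ (z ⬝ᵥ a) ^ 2 - τ ^ 2 * z 0 ^ 2 - lam * (z 0 ^ 2 - (z ⬝ᵥ vecCons 0 1) ^ 2) := by
  by_cases hroot : ∃ ζ : Fin n → ℝ, |∑ j, ζ j| ≤ δ ∧ vecCons δ ζ ⬝ᵥ a = 0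
  · obtain ⟨ζ, hζ, h0⟩ := hroot
    have hτ : τ = 0 := by
      have := h ζ hζ
      rw [h0] at this
      exact pow_eq_zero_iff two_ne_zero |>.mp (by nlinarith [sq_nonneg τ, pow_pos hδ 2])
    exact ⟨0, le_rfl, fun z => by simp [hτ, sq_nonneg]⟩
  push Not at hroot
  set c := a i₀.succ
  have hconst : ∀ i : Fin n, a i.succ = c := fun i => by
    by_contra hne
    obtain ⟨ζ, hs, h0⟩ := exists_cons_dotProduct_eq_zero_of_ne (δ := δ) hne
    exact hroot ζ (by simpa [hs] using hδ.le) h0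
  have hc : |c| < |a 0| := by
    by_contra! hle
    obtain ⟨ζ, hζ, h0⟩ := exists_cons_dotProduct_eq_zero_of_abs_le hδ.le hle
    exact hroot ζ hζ h0
  have hbound : ∀ s : ℝ, |s| ≤ 1 → τ ^ 2 ≤ (a 0 + s * c) ^ 2 := fun s hs => by
    have := h (Pi.single i₀ (s * δ)) (by
      rw [Finset.sum_pi_single', if_pos (Finset.mem_univ _), abs_mul, abs_of_pos hδ]
      exact mul_le_of_le_one_left hδ.le hs)
    rw [cons_dotProduct_single] at this
    refine le_of_mul_le_mul_right ?_ (pow_pos hδ 2)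
    linear_combination this
  have hτ := sq_le_sq_abs_sub_abs (by simpa [sub_eq_add_neg] using hbound (-1) (by simp))
    (by simpa using hbound 1 (by simp))
  refine ⟨|a 0 * c| - c ^ 2, ?_, fun z => ?_⟩
  · rw [abs_mul, ← sq_abs c, sq, ← sub_mul]
    exact mul_nonneg (sub_nonneg.2 hc.le) (abs_nonneg c)
  · rw [dotProduct_eq_of_succ_eq hconst]
    exact relaxation_form_nonneg hτ _ _

end Slab

/-- Quadratic-relaxation form of the polyhedral feasibility condition (precise version of
Theorem 4.3): the condition over the slab `|∑ⱼ ζⱼ| ≤ δ_P` holds iff there is `λ ≥ 0` with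
`A - λ B⁽ᴾ⁾` positive semidefinite. -/
theorem feasibility_polyhedral_relaxed (n : ℕ) (hn : 1 ≤ n) (x : Fin n → ℝ) (τ : ℝ)
    (μ : Fin (n + 1) → Fin n → ℝ) (δP : ℝ) (hδP : 0 < δP) :
    (∀ ζ : Fin n → ℝ, |∑ j, ζ j| ≤ δP →
        τ ^ 2 * δP ^ 2 ≤ ((δP • μ 0 + ∑ j : Fin n, ζ j • μ j.succ) ⬝ᵥ x) ^ 2) ↔
      ∃ lam : ℝ, 0 ≤ lam ∧ IsPSD (Amat n x τ μ - lam • BP n) := by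
  simp only [IsPSD, dotProduct_Amat_sub_smul_BP_mulVec,
    add_sum_smul_dotProduct_eq_cons_dotProduct_avec]
  exact ⟨exists_multiplier_of_forall_slab hδP ⟨0, hn⟩,
    fun ⟨_, hlam, hpsd⟩ => forall_slab_of_multiplier hlam hpsd⟩
end
end
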